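/- arXiv:2510.20861 — 4 statements merged into one kernel-verified Lean document; each statement's English description precedes it below -/
import Mathlib

section
/- For all real parameters l > 0 and r > 0, the asymmetric relation S_q defined on the reals by S_q(x,y) = max(1 − (x − y)/l, 0) if x > y and S_q(x,y) = max(1 − (y − x)/r, 0) if x ≤ y is a fuzzy T-quasi-similarity relation for the Łukasiewicz t-norm; that is, for all real x, y, z: S_q(x,x) = 1 and max(0, S_q(x,y) + S_q(y,z) − 1) ≤ S_q(x,z). -/
/-- The asymmetric relation `S_q(l,r)`. -/
noncomputable def Sq (l r x y : ℝ) : ℝ :=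
  if x > y then max (1 - |x - y| / l) 0 else max (1 - |x - y| / r) 0

/-- The Łukasiewicz t-norm `T(a,b) = max(0, a + b - 1)`. -/
noncomputable def luk (a b : ℝ) : ℝ := max 0 (a + b - 1)

lemma luk_helper (a b c : ℝ) (ha : a ≤ 1) (hb : b ≤ 1) (h : a + b - 1 ≤ c) :
    max 0 (max a 0 + max b 0 - 1) ≤ max c 0 := by
  rcases le_total a 0 with h1 | h1 <;> rcases le_total b 0 with h2 | h2 <;>
    rcases le_total c 0 with h3 | h3 <;>
    simp [max_le_iff, le_max_iff, max_eq_left, max_eq_right, *] <;>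
    first | linarith | (left; linarith) | (constructor <;> first | linarith | (left; linarith))

theorem Sq_is_T_quasi_similarity (l r : ℝ) (hl : 0 < l) (hr : 0 < r) (x y z : ℝ) :
    Sq l r x x = 1 ∧ luk (Sq l r x y) (Sq l r y z) ≤ Sq l r x z := by
  constructor
  · simp [Sq]
  · unfold Sq luk
    have hxy1 : 1 - |x - y| / l ≤ 1 := by
      have : 0 ≤ |x - y| / l := by positivity
      linarith
    have hxy2 : 1 - |x - y| / r ≤ 1 := by
      have : 0 ≤ |x - y| / r := by positivity
      linarith
    have hyz1 : 1 - |y - z| / l ≤ 1 := by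
      have : 0 ≤ |y - z| / l := by positivity
      linarith
    have hyz2 : 1 - |y - z| / r ≤ 1 := by
      have : 0 ≤ |y - z| / r := by positivity
      linarith
    split_ifs with h1 h2 h3 h3 h2 h3 h3
    -- case TTT
    · refine luk_helper _ _ _ hxy1 hyz1 ?_
      rw [abs_of_pos (show (0:ℝ) < x - y by linarith),
          abs_of_pos (show (0:ℝ) < y - z by linarith),
          abs_of_pos (show (0:ℝ) < x - z by linarith)]
      have h4 : (x - z) / l = (x - y) / l + (y - z) / l := by field_simp; ring
      linarith
    -- case TTF : impossible
    · exact absurd (by linarith : z < z) (lt_irrefl z)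
    -- case TFT
    · refine luk_helper _ _ _ hxy1 hyz2 ?_
      rw [abs_of_pos (show (0:ℝ) < x - y by linarith),
          abs_sub_comm y z, abs_of_nonneg (show (0:ℝ) ≤ z - y by linarith),
          abs_of_pos (show (0:ℝ) < x - z by linarith)]
      have h4 : (x - z) / l ≤ (x - y) / l := (div_le_div_iff_of_pos_right (by assumption)).mpr (by linarith)
      have h5 : 0 ≤ (z - y) / r := div_nonneg (by linarith) hr.le
      linarith
    -- case TFF
    · refine luk_helper _ _ _ hxy1 hyz2 ?_
      rw [abs_of_pos (show (0:ℝ) < x - y by linarith),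
          abs_sub_comm y z, abs_of_nonneg (show (0:ℝ) ≤ z - y by linarith),
          abs_sub_comm x z, abs_of_nonneg (show (0:ℝ) ≤ z - x by linarith)]
      have h4 : (z - x) / r ≤ (z - y) / r := (div_le_div_iff_of_pos_right (by assumption)).mpr (by linarith)
      have h5 : 0 ≤ (x - y) / l := div_nonneg (by linarith) hl.le
      linarith
    -- case FTT
    · refine luk_helper _ _ _ hxy2 hyz1 ?_
      rw [abs_sub_comm x y, abs_of_nonneg (show (0:ℝ) ≤ y - x by linarith),
          abs_of_pos (show (0:ℝ) < y - z by linarith),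
          abs_of_pos (show (0:ℝ) < x - z by linarith)]
      have h4 : (x - z) / l ≤ (y - z) / l := (div_le_div_iff_of_pos_right (by assumption)).mpr (by linarith)
      have h5 : 0 ≤ (y - x) / r := div_nonneg (by linarith) hr.le
      linarith
    -- case FTF
    · refine luk_helper _ _ _ hxy2 hyz1 ?_
      rw [abs_sub_comm x y, abs_of_nonneg (show (0:ℝ) ≤ y - x by linarith),
          abs_of_pos (show (0:ℝ) < y - z by linarith),
          abs_sub_comm x z, abs_of_nonneg (show (0:ℝ) ≤ z - x by linarith)]
      have h4 : (z - x) / r ≤ (y - x) / r := (div_le_div_iff_of_pos_right (by assumption)).mpr (by linarith)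
      have h5 : 0 ≤ (y - z) / l := div_nonneg (by linarith) hl.le
      linarith
    -- case FFT : impossible
    · exact absurd (by linarith : x < x) (lt_irrefl x)
    -- case FFF
    · refine luk_helper _ _ _ hxy2 hyz2 ?_
      rw [abs_sub_comm x y, abs_of_nonneg (show (0:ℝ) ≤ y - x by linarith),
          abs_sub_comm y z, abs_of_nonneg (show (0:ℝ) ≤ z - y by linarith),
          abs_sub_comm x z, abs_of_nonneg (show (0:ℝ) ≤ z - x by linarith)]
      have h4 : (z - x) / r = (y - x) / r + (z - y) / r := by field_simp; ring
      linarith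
end

section
/- Addition of extensional fuzzy numbers built from the relation S_t agrees with the Zadeh sup–T extension: for all reals x, y, z and all parameters p_x, p_y > 0, the supremum over a ∈ ℝ of max(0, S_t(p_x)(x,a) + S_t(p_y)(y, z − a) − 1) equals S_t(max(p_x,p_y))(x + y, z); i.e., the Łukasiewicz-extension sum of x_{S_t(p_x)} and y_{S_t(p_y)} is the extensional fuzzy number (x+y)_{S_t(max(p_x,p_y))}. -/
/-! `S_t(p)` depends only on `x - y`, grows with `p`, and is transitive for the Łukasiewicz
t-norm (the triangle inequality for `|x - y|`). Hence every term of the supremum is at most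
`T(S_t(q)(x + y, a + y), S_t(q)(a + y, z)) ≤ S_t(q)(x + y, z)` with `q = max p_x p_y`, and the
bound is attained at `a = x` or `a = z - y`, where the factor with the smaller parameter is `1`. -/

/-- The relation `S_t(p)(x,y) = max(1 - |x - y|/p, 0)`. -/
noncomputable def St (p x y : ℝ) : ℝ := max (1 - |x - y| / p) 0

lemma St_nonneg (p x y : ℝ) : 0 ≤ St p x y := le_max_right _ _

lemma St_self (p x : ℝ) : St p x x = 1 := by
  simp [St]

lemma St_eq_of_sub_eq {p x y x' y' : ℝ} (h : x - y = x' - y') : St p x y = St p x' y' := by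
  rw [St, St, h]

lemma St_le_St_of_le {p q : ℝ} (hp : 0 < p) (hpq : p ≤ q) (x y : ℝ) : St p x y ≤ St q x y :=
  max_le_max (sub_le_sub_left (div_le_div_of_nonneg_left (abs_nonneg _) hp hpq) 1) le_rfl

lemma luk_le_luk {a b a' b' : ℝ} (ha : a ≤ a') (hb : b ≤ b') : luk a b ≤ luk a' b' :=
  max_le_max le_rfl (by linarith)

lemma luk_one_left {b : ℝ} (hb : 0 ≤ b) : luk 1 b = b := by
  simp [luk, hb]

lemma luk_one_right {a : ℝ} (ha : 0 ≤ a) : luk a 1 = a := by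
  simp [luk, ha]

lemma luk_St_le_St {p : ℝ} (hp : 0 < p) (x y z : ℝ) : luk (St p x y) (St p y z) ≤ St p x z := by
  refine max_le (St_nonneg p x z) ?_
  have hxz : |x - z| / p ≤ |x - y| / p + |y - z| / p := by
    rw [← add_div]
    exact div_le_div_of_nonneg_right (abs_sub_le x y z) hp.le
  have hxy : 0 ≤ |x - y| / p := by positivity
  have hyz : 0 ≤ |y - z| / p := by positivity
  have hSt : 1 - |x - z| / p ≤ St p x z := le_max_left _ _
  simp only [St, max_def]
  split_ifs <;> linarith

theorem St_addition (x y z px py : ℝ) (hpx : 0 < px) (hpy : 0 < py) :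
    (⨆ a : ℝ, luk (St px x a) (St py y (z - a))) = St (max px py) (x + y) z := by
  set q := max px py
  have upper : ∀ a, luk (St px x a) (St py y (z - a)) ≤ St q (x + y) z := fun a =>
    calc luk (St px x a) (St py y (z - a))
        ≤ luk (St q (x + y) (a + y)) (St q (a + y) z) := by
          rw [St_eq_of_sub_eq (show x - a = x + y - (a + y) by ring),
            St_eq_of_sub_eq (show y - (z - a) = a + y - z by ring)]
          exact luk_le_luk (St_le_St_of_le hpx (le_max_left _ _) _ _)
            (St_le_St_of_le hpy (le_max_right _ _) _ _)
      _ ≤ St q (x + y) z := luk_St_le_St (hpx.trans_le (le_max_left _ _)) _ _ _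
  obtain ⟨a, ha⟩ : ∃ a, luk (St px x a) (St py y (z - a)) = St q (x + y) z := by
    rcases le_total px py with h | h
    · refine ⟨x, ?_⟩
      rw [St_self, luk_one_left (St_nonneg _ _ _), show q = py from max_eq_right h]
      exact St_eq_of_sub_eq (by ring)
    · refine ⟨z - y, ?_⟩
      rw [sub_sub_cancel, St_self, luk_one_right (St_nonneg _ _ _), show q = px from max_eq_left h]
      exact St_eq_of_sub_eq (by ring)
  exact le_antisymm (ciSup_le upper) (ha ▸ le_ciSup ⟨_, Set.forall_mem_range.2 upper⟩ a)
end

section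
/- Addition of extensional fuzzy numbers built from the relation S_e agrees with the Zadeh sup–T extension: for all reals x, y, z and all parameters p_x, p_y > 0, the supremum over a ∈ ℝ of S_e(p_x)(x,a) · S_e(p_y)(y, z − a) equals S_e(max(p_x,p_y))(x + y, z); i.e., the product-t-norm extension sum of x_{S_e(p_x)} and y_{S_e(p_y)} is the extensional fuzzy number (x+y)_{S_e(max(p_x,p_y))}. -/
/-! The bound `S_e(p)(x,a) · S_e(q)(y,b) ≤ S_e(max p q)(x+y, a+b)` comes from the triangle
inequality `|x + y - (a + b)| ≤ |x - a| + |y - b|` and the monotonicity of `S_e` in its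
parameter; it is attained by putting all of the distance into the summand with the larger
parameter, i.e. `a = z - y` when `py ≤ px`. -/

/-- The relation `S_e(p)(x,y) = exp(-|x - y|/p)`. -/
noncomputable def Se (p x y : ℝ) : ℝ := Real.exp (-(|x - y| / p))

theorem Se_self (p x : ℝ) : Se p x x = 1 := by
  simp [Se]

theorem Se_sub_right (p x y z : ℝ) : Se p x (z - y) = Se p (x + y) z := by
  rw [Se, Se, show x - (z - y) = x + y - z by ring]

theorem Se_le_Se_of_le {p q : ℝ} (hp : 0 < p) (hpq : p ≤ q) (x y : ℝ) : Se p x y ≤ Se q x y :=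
  Real.exp_le_exp.mpr <| neg_le_neg <| div_le_div_of_nonneg_left (abs_nonneg _) hp hpq

theorem Se_mul_Se_le_Se_add {p : ℝ} (hp : 0 ≤ p) (x a y b : ℝ) :
    Se p x a * Se p y b ≤ Se p (x + y) (a + b) := by
  rw [Se, Se, Se, ← Real.exp_add, Real.exp_le_exp, ← neg_add, neg_le_neg_iff, ← add_div]
  gcongr
  calc |x + y - (a + b)| = |(x - a) + (y - b)| := by ring_nf
    _ ≤ |x - a| + |y - b| := abs_add_le _ _

theorem Se_mul_Se_le_Se_max_add {p q : ℝ} (hp : 0 < p) (hq : 0 < q) (x a y b : ℝ) :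
    Se p x a * Se q y b ≤ Se (max p q) (x + y) (a + b) :=
  calc Se p x a * Se q y b ≤ Se (max p q) x a * Se (max p q) y b :=
        mul_le_mul (Se_le_Se_of_le hp (le_max_left p q) x a)
          (Se_le_Se_of_le hq (le_max_right p q) y b) (Real.exp_nonneg _) (Real.exp_nonneg _)
    _ ≤ Se (max p q) (x + y) (a + b) := Se_mul_Se_le_Se_add (hp.le.trans (le_max_left p q)) ..

theorem Se_addition (x y z px py : ℝ) (hpx : 0 < px) (hpy : 0 < py) :
    (⨆ a : ℝ, Se px x a * Se py y (z - a)) = Se (max px py) (x + y) z := by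
  have hub : ∀ a, Se px x a * Se py y (z - a) ≤ Se (max px py) (x + y) z := fun a => by
    simpa using Se_mul_Se_le_Se_max_add hpx hpy x a y (z - a)
  have hbdd : BddAbove (Set.range fun a => Se px x a * Se py y (z - a)) :=
    ⟨_, Set.forall_mem_range.mpr hub⟩
  refine le_antisymm (ciSup_le hub) ?_
  rcases le_total py px with h | h
  · calc Se (max px py) (x + y) z = Se px x (z - y) * Se py y (z - (z - y)) := by
          rw [max_eq_left h, sub_sub_cancel, Se_self, mul_one, Se_sub_right]
      _ ≤ _ := le_ciSup hbdd _
  · calc Se (max px py) (x + y) z = Se px x x * Se py y (z - x) := by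
          rw [max_eq_right h, Se_self, one_mul, Se_sub_right, add_comm]
      _ ≤ _ := le_ciSup hbdd _
end

section
/- Addition of extensional fuzzy numbers built from the asymmetric relation S_q agrees with the Zadeh sup–T extension: for all reals x, y, z and all parameters l_x, r_x, l_y, r_y > 0, the supremum over a ∈ ℝ of max(0, S_q(l_x,r_x)(x,a) + S_q(l_y,r_y)(y, z − a) − 1) equals S_q(max(l_x,l_y), max(r_x,r_y))(x + y, z). -/
/-!
Writing `g_{l,r}(t) = max (t / l) (-t / r)`, one has `S_q(l,r)(x,y) = max (1 - g_{l,r}(x - y)) 0`,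
and for nonnegative `a, b` the Łukasiewicz t-norm turns `max (1 - a) 0, max (1 - b) 0` into
`max (1 - (a + b)) 0`. The Zadeh sum at `z` is therefore `max (1 - m) 0` with `m` the infimum over `a`
of `g_x(x - a) + g_y(a - (z - y))`. The gauge with parameters `max l_x l_y, max r_x r_y` is
subadditive and equals `min g_x g_y`, so it bounds every such sum from below at `x + y - z`, and
the choices `a = x` and `a = z - y` attain `g_y(x + y - z)` and `g_x(x + y - z)`.
-/

noncomputable def asymGauge (l r t : ℝ) : ℝ := max (t / l) (-t / r)

section asymGauge

variable {l r l' r' s t : ℝ}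

theorem asymGauge_of_nonneg (hl : 0 ≤ l) (hr : 0 ≤ r) (ht : 0 ≤ t) : asymGauge l r t = t / l :=
  max_eq_left <| (div_nonpos_of_nonpos_of_nonneg (neg_nonpos.2 ht) hr).trans (div_nonneg ht hl)

theorem asymGauge_of_nonpos (hl : 0 ≤ l) (hr : 0 ≤ r) (ht : t ≤ 0) : asymGauge l r t = -t / r :=
  max_eq_right <| (div_nonpos_of_nonpos_of_nonneg ht hl).trans (div_nonneg (neg_nonneg.2 ht) hr)

theorem asymGauge_nonneg (hl : 0 ≤ l) (hr : 0 ≤ r) : 0 ≤ asymGauge l r t := by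
  rcases le_total 0 t with ht | ht
  · exact (div_nonneg ht hl).trans (le_max_left _ _)
  · exact (div_nonneg (neg_nonneg.2 ht) hr).trans (le_max_right _ _)

@[simp]
theorem asymGauge_zero : asymGauge l r 0 = 0 := by
  simp [asymGauge]

theorem asymGauge_add_le : asymGauge l r (s + t) ≤ asymGauge l r s + asymGauge l r t := by
  unfold asymGauge
  refine max_le ?_ ?_
  · rw [add_div]
    exact add_le_add (le_max_left _ _) (le_max_left _ _)
  · rw [neg_add, add_div]
    exact add_le_add (le_max_right _ _) (le_max_right _ _)

theorem div_max_of_nonneg {a b c : ℝ} (ha : 0 ≤ a) (hb : 0 < b) (hc : 0 < c) :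
    a / max b c = min (a / b) (a / c) := by
  rcases le_total b c with h | h
  · rw [max_eq_right h, min_eq_right (div_le_div_of_nonneg_left ha hb h)]
  · rw [max_eq_left h, min_eq_left (div_le_div_of_nonneg_left ha hc h)]

theorem asymGauge_max_max (hl : 0 < l) (hr : 0 < r) (hl' : 0 < l') (hr' : 0 < r') :
    asymGauge (max l l') (max r r') t = min (asymGauge l r t) (asymGauge l' r' t) := by
  have hL : 0 ≤ max l l' := hl.le.trans (le_max_left _ _)
  have hR : 0 ≤ max r r' := hr.le.trans (le_max_left _ _)
  rcases le_total 0 t with ht | ht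
  · simp only [asymGauge_of_nonneg hL hR ht, asymGauge_of_nonneg hl.le hr.le ht,
      asymGauge_of_nonneg hl'.le hr'.le ht, div_max_of_nonneg ht hl hl']
  · simp only [asymGauge_of_nonpos hL hR ht, asymGauge_of_nonpos hl.le hr.le ht,
      asymGauge_of_nonpos hl'.le hr'.le ht, div_max_of_nonneg (neg_nonneg.2 ht) hr hr']

end asymGauge

theorem Sq_eq_max_one_sub_asymGauge {l r : ℝ} (hl : 0 ≤ l) (hr : 0 ≤ r) (x y : ℝ) :
    Sq l r x y = max (1 - asymGauge l r (x - y)) 0 := by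
  unfold Sq
  split_ifs with h
  · rw [abs_of_pos (sub_pos.2 h), asymGauge_of_nonneg hl hr (sub_pos.2 h).le]
  · have h' : x - y ≤ 0 := sub_nonpos.2 (not_lt.1 h)
    rw [abs_of_nonpos h', asymGauge_of_nonpos hl hr h']

theorem luk_max_one_sub {a b : ℝ} (ha : 0 ≤ a) (hb : 0 ≤ b) :
    luk (max (1 - a) 0) (max (1 - b) 0) = max (1 - (a + b)) 0 := by
  simp only [luk, max_def]
  split_ifs <;> linarith

section addition

variable {x y z lx rx ly ry : ℝ}

theorem luk_Sq_Sq_eq (hlx : 0 < lx) (hrx : 0 < rx) (hly : 0 < ly) (hry : 0 < ry) (a : ℝ) :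
    luk (Sq lx rx x a) (Sq ly ry y (z - a))
      = max (1 - (asymGauge lx rx (x - a) + asymGauge ly ry (a - (z - y)))) 0 := by
  rw [Sq_eq_max_one_sub_asymGauge hlx.le hrx.le, Sq_eq_max_one_sub_asymGauge hly.le hry.le,
    luk_max_one_sub (asymGauge_nonneg hlx.le hrx.le) (asymGauge_nonneg hly.le hry.le),
    show y - (z - a) = a - (z - y) by ring]

theorem luk_Sq_Sq_le (hlx : 0 < lx) (hrx : 0 < rx) (hly : 0 < ly) (hry : 0 < ry) (a : ℝ) :
    luk (Sq lx rx x a) (Sq ly ry y (z - a)) ≤ Sq (max lx ly) (max rx ry) (x + y) z := by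
  rw [luk_Sq_Sq_eq hlx hrx hly hry,
    Sq_eq_max_one_sub_asymGauge (hlx.le.trans (le_max_left _ _)) (hrx.le.trans (le_max_left _ _))]
  have hgauge : asymGauge (max lx ly) (max rx ry) (x + y - z)
      ≤ asymGauge lx rx (x - a) + asymGauge ly ry (a - (z - y)) := by
    rw [show x + y - z = (x - a) + (a - (z - y)) by ring]
    refine asymGauge_add_le.trans (add_le_add ?_ ?_) <;> rw [asymGauge_max_max hlx hrx hly hry]
    exacts [min_le_left _ _, min_le_right _ _]
  gcongr

end addition

theorem Sq_addition (x y z lx rx ly ry : ℝ)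
    (hlx : 0 < lx) (hrx : 0 < rx) (hly : 0 < ly) (hry : 0 < ry) :
    (⨆ a : ℝ, luk (Sq lx rx x a) (Sq ly ry y (z - a)))
      = Sq (max lx ly) (max rx ry) (x + y) z := by
  have hbdd : BddAbove (Set.range fun a => luk (Sq lx rx x a) (Sq ly ry y (z - a))) :=
    ⟨_, Set.forall_mem_range.2 (luk_Sq_Sq_le hlx hrx hly hry)⟩
  refine le_antisymm (ciSup_le (luk_Sq_Sq_le hlx hrx hly hry)) ?_
  rw [Sq_eq_max_one_sub_asymGauge (hlx.le.trans (le_max_left _ _))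
    (hrx.le.trans (le_max_left _ _)), asymGauge_max_max hlx hrx hly hry]
  rcases min_choice (asymGauge lx rx (x + y - z)) (asymGauge ly ry (x + y - z)) with h | h
  · refine le_of_eq_of_le ?_ (le_ciSup hbdd (z - y))
    rw [h, luk_Sq_Sq_eq hlx hrx hly hry, sub_self, asymGauge_zero, add_zero, sub_sub_eq_add_sub]
  · refine le_of_eq_of_le ?_ (le_ciSup hbdd x)
    rw [h, luk_Sq_Sq_eq hlx hrx hly hry, sub_self, asymGauge_zero, zero_add, sub_sub_eq_add_sub]
end
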